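/- For every m ≥ 1 and every t ≥ 0, ‖T(t) − T_m(t)‖ ≥ e^{−t}(e^{√m t} − 1); indeed, every z ∈ X of the form z = (0,…,0,z_m,0,…) satisfies ‖T(t)z − T_m(t)z‖ = e^{−t}(e^{√m t} − 1)‖z‖. -/

import Mathlib

open MeasureTheory Filter Set
open scoped Topology Real ZeroAtInfty

/-- A strongly continuous (C₀) semigroup on a Banach space `X`. -/
def IsC0Semigroup {X : Type*} [NormedAddCommGroup X] [NormedSpace ℂ X]
    (T : ℝ → X →L[ℂ] X) : Prop :=
  T 0 = 1 ∧
  (∀ t s : ℝ, 0 ≤ t → 0 ≤ s → T (t + s) = (T t).comp (T s)) ∧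
  (∀ x : X, ContinuousOn (fun t => T t x) (Set.Ici (0 : ℝ)))

/-! On the `m`-th coordinate the two semigroups differ by the scalar factor
`e^{(-1+im)t} (1 - e^{√m t})`, of modulus `e^{-t}(e^{√m t} - 1)`, so `T(t) - T_m(t)` acts on
vectors supported there as multiplication by that scalar; testing the operator norm on the
`m`-th unit vector gives the lower bound. -/

namespace ZeroAtInftyContinuousMap

variable {α β : Type*} [TopologicalSpace α] [DiscreteTopology α] [DecidableEq α]
  [Zero β] [TopologicalSpace β]

def single (a : α) (b : β) : C₀(α, β) where
  toFun x := if x = a then b else 0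
  continuous_toFun := continuous_of_discreteTopology
  zero_at_infty' := by
    rw [cocompact_eq_cofinite]
    refine tendsto_const_nhds.congr' ?_
    filter_upwards [(Set.finite_singleton a).compl_mem_cofinite] with x hx
    exact (if_neg hx).symm

@[simp]
theorem single_apply (a : α) (b : β) (x : α) : single a b x = if x = a then b else 0 := rfl

theorem single_ne_zero (a : α) {b : β} (hb : b ≠ 0) : single a b ≠ 0 := fun h ↦
  hb (by simpa using congr($h a))

end ZeroAtInftyContinuousMap

theorem ContinuousLinearMap.le_opNorm_of_norm_apply_eq {𝕜 E F : Type*} [NontriviallyNormedField 𝕜]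
    [NormedAddCommGroup E] [NormedSpace 𝕜 E] [NormedAddCommGroup F] [NormedSpace 𝕜 F]
    (f : E →L[𝕜] F) {x : E} (hx : x ≠ 0) {C : ℝ} (h : ‖f x‖ = C * ‖x‖) : C ≤ ‖f‖ := by
  simpa [h, hx] using f.ratio_le_opNorm x

theorem Complex.norm_exp_mul_one_sub_exp_ofReal (w : ℂ) {a : ℝ} (ha : 0 ≤ a) :
    ‖exp w * (1 - exp a)‖ = Real.exp w.re * (Real.exp a - 1) := by
  rw [norm_mul, norm_exp, ← ofReal_exp, ← ofReal_one, ← ofReal_sub, norm_real, Real.norm_eq_abs,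
    abs_of_nonpos (sub_nonpos.mpr (Real.one_le_exp_iff.mpr ha)), neg_sub]

theorem T_Tm_difference_large_general
    (T : ℝ → C₀(ℕ, ℂ) →L[ℂ] C₀(ℕ, ℂ))
    (hT : ∀ t : ℝ, 0 ≤ t → ∀ (x : C₀(ℕ, ℂ)) (n : ℕ),
      T t x n = Complex.exp ((-1 + (n : ℂ) * Complex.I) * (t : ℂ)) * x n)
    (m : ℕ)
    (Tm : ℝ → C₀(ℕ, ℂ) →L[ℂ] C₀(ℕ, ℂ))
    (hTm : ∀ t : ℝ, 0 ≤ t → ∀ (x : C₀(ℕ, ℂ)) (n : ℕ),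
      Tm t x n = if n = m then
          Complex.exp ((-1 + (m : ℂ) * Complex.I) * (t : ℂ) + (Real.sqrt m : ℂ) * (t : ℂ)) * x m
        else Complex.exp ((-1 + (n : ℂ) * Complex.I) * (t : ℂ)) * x n) :
    ∀ t : ℝ, 0 ≤ t →
      Real.exp (-t) * (Real.exp (Real.sqrt m * t) - 1) ≤ ‖T t - Tm t‖ ∧
      ∀ z : C₀(ℕ, ℂ), (∀ n : ℕ, n ≠ m → z n = 0) →
        ‖T t z - Tm t z‖ = Real.exp (-t) * (Real.exp (Real.sqrt m * t) - 1) * ‖z‖ := by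
  intro t ht
  set c : ℂ := Complex.exp ((-1 + (m : ℂ) * Complex.I) * t) *
    (1 - Complex.exp ((Real.sqrt m * t : ℝ) : ℂ))
  have hc : ‖c‖ = Real.exp (-t) * (Real.exp (Real.sqrt m * t) - 1) := by
    rw [Complex.norm_exp_mul_one_sub_exp_ofReal _ (by positivity)]
    simp
  have hdiff : ∀ z : C₀(ℕ, ℂ), (∀ n, n ≠ m → z n = 0) → T t z - Tm t z = c • z := by
    intro z hz
    ext n
    simp only [ZeroAtInftyContinuousMap.coe_sub, ZeroAtInftyContinuousMap.coe_smul, Pi.sub_apply,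
      Pi.smul_apply, smul_eq_mul, hT t ht, hTm t ht]
    rcases eq_or_ne n m with rfl | hn
    · simp only [c, Complex.exp_add]
      push_cast
      ring
    · simp [hn, hz n hn]
  have hnorm : ∀ z : C₀(ℕ, ℂ), (∀ n, n ≠ m → z n = 0) →
      ‖T t z - Tm t z‖ = Real.exp (-t) * (Real.exp (Real.sqrt m * t) - 1) * ‖z‖ := fun z hz ↦ by
    rw [hdiff z hz, norm_smul, hc]
  refine ⟨(T t - Tm t).le_opNorm_of_norm_apply_eq
    (ZeroAtInftyContinuousMap.single_ne_zero m one_ne_zero) (hnorm _ fun n hn ↦ ?_), hnorm⟩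
  simp [hn]

/-- On `X = c₀`, the difference between the diagonal semigroup `T(t)` and its
perturbation `T_m(t)` satisfies `‖T(t) - T_m(t)‖ ≥ e^{-t}(e^{√m t} - 1)`; indeed
equality `‖T(t)z - T_m(t)z‖ = e^{-t}(e^{√m t} - 1)‖z‖` holds for every `z`
supported on the `m`-th coordinate. -/
theorem T_Tm_difference_large
    (T : ℝ → C₀(ℕ, ℂ) →L[ℂ] C₀(ℕ, ℂ)) (hsgT : IsC0Semigroup T)
    (hT : ∀ t : ℝ, 0 ≤ t → ∀ (x : C₀(ℕ, ℂ)) (n : ℕ),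
      T t x n = Complex.exp ((-1 + (n : ℂ) * Complex.I) * (t : ℂ)) * x n)
    (m : ℕ) (hm : 1 ≤ m)
    (Tm : ℝ → C₀(ℕ, ℂ) →L[ℂ] C₀(ℕ, ℂ)) (hsgTm : IsC0Semigroup Tm)
    (hTm : ∀ t : ℝ, 0 ≤ t → ∀ (x : C₀(ℕ, ℂ)) (n : ℕ),
      Tm t x n = if n = m then
          Complex.exp ((-1 + (m : ℂ) * Complex.I) * (t : ℂ) + (Real.sqrt m : ℂ) * (t : ℂ)) * x m
        else Complex.exp ((-1 + (n : ℂ) * Complex.I) * (t : ℂ)) * x n) :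
    ∀ t : ℝ, 0 ≤ t →
      Real.exp (-t) * (Real.exp (Real.sqrt m * t) - 1) ≤ ‖T t - Tm t‖ ∧
      ∀ z : C₀(ℕ, ℂ), (∀ n : ℕ, n ≠ m → z n = 0) →
        ‖T t z - Tm t z‖ = Real.exp (-t) * (Real.exp (Real.sqrt m * t) - 1) * ‖z‖ :=
  T_Tm_difference_large_general T hT m Tm hTm
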